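/- arXiv:2602.05705 — 3 statements merged into one kernel-verified Lean document; each statement's English description precedes it below -/
import Mathlib

section
/- Every point of weighted projective space over ℚ admits an integral representative with weighted gcd equal to 1; that is, for every nonzero x ∈ ℚ^{n+1} there exists λ ∈ ℚ^× such that λ^{a_i} x_i ∈ ℤ for all i and for every prime p there exists an index i with ⌊v_p(λ^{a_i} x_i)/a_i⌋ = 0 (where v_p is the p-adic valuation and the coordinate is nonzero). -/
/-!
Clearing denominators gives some integral representative. Among integral representatives choose
one minimising `|y j|` for a fixed nonzero coordinate `j`: if a prime `p` had `p ^ a i ∣ y i` for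
every `i`, then rescaling by `λ = 1/p` would give another integral representative with a strictly
smaller `j`-th coordinate.
-/

/-- `wgcdOne n a y` says the weighted gcd of the nonzero integer vector `y` is `1`:
for every prime `p` there is an index `i` with `y i ≠ 0` and `⌊v_p(y i) / a i⌋ = 0`. -/
def wgcdOne (n : ℕ) (a : Fin (n+1) → ℕ) (y : Fin (n+1) → ℤ) : Prop :=
  ∀ p : ℕ, p.Prime → ∃ i, y i ≠ 0 ∧ (padicValInt p (y i)) / (a i) = 0

lemma Rat.exists_intCast_eq_mul_of_den_dvd (q : ℚ) {N : ℤ} (h : (q.den : ℤ) ∣ N) :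
    ∃ z : ℤ, (z : ℚ) = N * q := by
  obtain ⟨c, rfl⟩ := h
  refine ⟨c * q.num, ?_⟩
  push_cast
  rw [← Rat.mul_den_eq_num]
  ring

lemma exists_weighted_smul_intCast {ι : Type*} [Fintype ι] (a : ι → ℕ) (ha : ∀ i, 0 < a i)
    (x : ι → ℚ) : ∃ l : ℚ, l ≠ 0 ∧ ∃ y : ι → ℤ, ∀ i, (y i : ℚ) = l ^ a i * x i := by
  obtain ⟨N, hdvd, hN⟩ : ∃ N : ℤ, (∀ i, ((x i).den : ℤ) ∣ N) ∧ (N : ℚ) ≠ 0 := by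
    refine ⟨∏ i, ((x i).den : ℤ), fun i ↦ Finset.dvd_prod_of_mem _ (Finset.mem_univ i), ?_⟩
    simp only [Int.cast_prod, Int.cast_natCast]
    exact Finset.prod_ne_zero_iff.mpr fun i _ ↦ Nat.cast_ne_zero.mpr (x i).den_ne_zero
  have hint : ∀ i, ∃ z : ℤ, (z : ℚ) = (N : ℚ) ^ a i * x i := by
    intro i
    obtain ⟨z, hz⟩ := (x i).exists_intCast_eq_mul_of_den_dvd (hdvd i)
    obtain ⟨k, hk⟩ := Nat.exists_eq_add_one_of_ne_zero (ha i).ne'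
    refine ⟨N ^ k * z, ?_⟩
    rw [hk, pow_succ, Int.cast_mul, Int.cast_pow, hz, mul_assoc]
  choose y hy using hint
  exact ⟨N, hN, y, hy⟩

lemma pow_dvd_of_padicValInt_div_ne_zero {p a : ℕ} (hp : p.Prime) {y : ℤ}
    (h : y ≠ 0 → padicValInt p y / a ≠ 0) : (p : ℤ) ^ a ∣ y := by
  rw [padicValInt_dvd_iff_of_ne_one hp.ne_one]
  by_cases hy : y = 0
  · exact Or.inl hy
  · exact Or.inr (Nat.le_of_not_lt fun hlt ↦ h hy (Nat.div_eq_of_lt hlt))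

lemma Int.natAbs_lt_natAbs_of_eq_prime_pow_mul {p a : ℕ} (hp : p.Prime) (ha : 0 < a) {y z : ℤ}
    (hz : z ≠ 0) (hyz : y = (p : ℤ) ^ a * z) : z.natAbs < y.natAbs := by
  rw [hyz, Int.natAbs_mul, Int.natAbs_pow, Int.natAbs_natCast]
  exact lt_mul_of_one_lt_left (Int.natAbs_pos.mpr hz) (Nat.one_lt_pow ha.ne' hp.one_lt)

theorem exists_weighted_smul_wgcdOne {n : ℕ} (a : Fin (n+1) → ℕ) (ha : ∀ i, 0 < a i)
    (j : Fin (n+1)) (y : Fin (n+1) → ℤ) (hyj : y j ≠ 0) :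
    ∃ l : ℚ, l ≠ 0 ∧ ∃ y' : Fin (n+1) → ℤ,
      (∀ i, (y' i : ℚ) = l ^ a i * y i) ∧ wgcdOne n a y' := by
  induction hm : (y j).natAbs using Nat.strong_induction_on generalizing y with
  | _ m ih =>
    by_cases hy : wgcdOne n a y
    · exact ⟨1, one_ne_zero, y, by simp, hy⟩
    simp only [wgcdOne, not_forall, not_exists, not_and] at hy
    obtain ⟨p, hp, hdiv⟩ := hy
    choose z hz using fun i ↦ pow_dvd_of_padicValInt_div_ne_zero hp (hdiv i)
    have hzj : z j ≠ 0 := fun h ↦ hyj (by rw [hz j, h, mul_zero])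
    obtain ⟨l, hl, y', hy', hwgcd⟩ := ih _
      (hm ▸ Int.natAbs_lt_natAbs_of_eq_prime_pow_mul hp (ha j) hzj (hz j)) z hzj rfl
    have hp0 : (p : ℚ) ≠ 0 := Nat.cast_ne_zero.mpr hp.ne_zero
    refine ⟨l / p, div_ne_zero hl hp0, y', fun i ↦ ?_, hwgcd⟩
    rw [hy' i, hz i, Int.cast_mul, Int.cast_pow, Int.cast_natCast, div_pow, ← mul_assoc,
      div_mul_cancel₀ _ (pow_ne_zero _ hp0)]

theorem stmt_1 (n : ℕ) (a : Fin (n+1) → ℕ) (ha : ∀ i, 1 ≤ a i)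
    (x : Fin (n+1) → ℚ) (hx : x ≠ 0) :
    ∃ l : ℚ, l ≠ 0 ∧ ∃ y : Fin (n+1) → ℤ,
      (∀ i, (y i : ℚ) = l ^ (a i) * x i) ∧ wgcdOne n a y := by
  obtain ⟨j, hxj⟩ := Function.ne_iff.mp hx
  obtain ⟨l, hl, y, hy⟩ := exists_weighted_smul_intCast a ha x
  have hyj : y j ≠ 0 := by
    rw [← Int.cast_ne_zero (α := ℚ), hy j]
    exact mul_ne_zero (pow_ne_zero _ hl) hxj
  obtain ⟨l', hl', y', hy', hwgcd⟩ := exists_weighted_smul_wgcdOne a ha j y hyj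
  refine ⟨l' * l, mul_ne_zero hl' hl, y', fun i ↦ ?_, hwgcd⟩
  rw [hy' i, hy i, mul_pow, mul_assoc]
end

section
/- The weighted height on weighted projective space over ℚ is well defined: for a nonzero vector x ∈ ℤ^{n+1} with weighted gcd 1, and any λ ∈ ℚ^× such that (λ^{a_0} x_0, ..., λ^{a_n} x_n) also lies in ℤ^{n+1} and has weighted gcd 1, one has max_i |λ^{a_i} x_i|^{1/a_i} = max_i |x_i|^{1/a_i}. -/
theorem Rat.abs_eq_one_of_forall_padicValRat_eq_zero {q : ℚ} (hq : q ≠ 0)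
    (h : ∀ p : ℕ, p.Prime → padicValRat p q = 0) : |q| = 1 := by
  have hcoprime : ∀ p : ℕ, p.Prime → ¬p ∣ q.num.natAbs ∧ ¬p ∣ q.den := by
    intro p hp
    have : Fact p.Prime := ⟨hp⟩
    have hv := h p hp
    rw [padicValRat_def, padicValInt] at hv
    have hnot_both : ¬(p ∣ q.num.natAbs ∧ p ∣ q.den) := fun ⟨hnum, hden⟩ =>
      hp.not_dvd_one (q.reduced ▸ Nat.dvd_gcd hnum hden)
    rw [dvd_iff_padicValNat_ne_zero q.den_nz,
      dvd_iff_padicValNat_ne_zero (Int.natAbs_ne_zero.2 (Rat.num_ne_zero.2 hq))] at hnot_both ⊢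
    omega
  have hnum : q.num.natAbs = 1 :=
    Nat.eq_one_iff_not_exists_prime_dvd.2 fun p hp => (hcoprime p hp).1
  have hden : q.den = 1 :=
    Nat.eq_one_iff_not_exists_prime_dvd.2 fun p hp => (hcoprime p hp).2
  rw [← Rat.coe_int_num_of_den_eq_one hden, ← Int.cast_abs, Int.abs_eq_natAbs, hnum]
  rfl

theorem padicValRat_nonpos_of_padicValInt_lt {p : ℕ} [Fact p.Prime] {l : ℚ} {k : ℕ} {x y : ℤ}
    (hxy : (y : ℚ) = l ^ k * x) (hy : y ≠ 0) (hlt : padicValInt p y < k) :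
    padicValRat p l ≤ 0 := by
  have hyq : (y : ℚ) ≠ 0 := by exact_mod_cast hy
  rw [hxy] at hyq
  have hval : (padicValInt p y : ℤ) = k * padicValRat p l + padicValInt p x := by
    rw [← padicValRat.of_int, ← padicValRat.of_int, hxy,
      padicValRat.mul (left_ne_zero_of_mul hyq) (right_ne_zero_of_mul hyq), padicValRat.pow]
  have hx_nonneg : (0 : ℤ) ≤ padicValInt p x := Int.natCast_nonneg _
  by_contra! hpos
  nlinarith

theorem padicValRat_nonpos_of_wgcdOne {n : ℕ} {a : Fin (n+1) → ℕ} (ha : ∀ i, 1 ≤ a i)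
    {x y : Fin (n+1) → ℤ} {l : ℚ} (hxy : ∀ i, (y i : ℚ) = l ^ (a i) * x i)
    (hwy : wgcdOne n a y) {p : ℕ} (hp : p.Prime) : padicValRat p l ≤ 0 := by
  have : Fact p.Prime := ⟨hp⟩
  obtain ⟨i, hyi, hdiv⟩ := hwy p hp
  have hlt : padicValInt p (y i) < a i :=
    (Nat.div_eq_zero_iff.mp hdiv).resolve_left (Nat.one_le_iff_ne_zero.mp (ha i))
  exact padicValRat_nonpos_of_padicValInt_lt (hxy i) hyi hlt

theorem stmt_2_general (n : ℕ) (a : Fin (n+1) → ℕ) (ha : ∀ i, 1 ≤ a i)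
    (x y : Fin (n+1) → ℤ) (hwx : wgcdOne n a x)
    (l : ℚ) (hl : l ≠ 0) (hxy : ∀ i, (y i : ℚ) = l ^ (a i) * x i)
    (hwy : wgcdOne n a y) :
    (⨆ i, (|y i| : ℝ) ^ ((a i : ℝ)⁻¹)) = ⨆ i, (|x i| : ℝ) ^ ((a i : ℝ)⁻¹) := by
  have hyx : ∀ i, (x i : ℚ) = l⁻¹ ^ (a i) * y i := fun i => by
    rw [hxy i, inv_pow, inv_mul_cancel_left₀ (pow_ne_zero _ hl)]
  have hval : ∀ p : ℕ, p.Prime → padicValRat p l = 0 := fun p hp => by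
    have : Fact p.Prime := ⟨hp⟩
    have hle := padicValRat_nonpos_of_wgcdOne ha hxy hwy hp
    have hge := padicValRat_nonpos_of_wgcdOne ha hyx hwx hp
    rw [padicValRat.inv] at hge
    omega
  have habs : |l| = 1 := Rat.abs_eq_one_of_forall_padicValRat_eq_zero hl hval
  have hyx_abs : ∀ i, |(y i : ℚ)| = |(x i : ℚ)| := fun i => by
    rw [hxy i, abs_mul, abs_pow, habs, one_pow, one_mul]
  congr with i
  exact_mod_cast congrArg (fun r : ℚ => (r : ℝ) ^ ((a i : ℝ)⁻¹)) (hyx_abs i)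

theorem stmt_2 (n : ℕ) (a : Fin (n+1) → ℕ) (ha : ∀ i, 1 ≤ a i)
    (x y : Fin (n+1) → ℤ) (hx0 : x ≠ 0) (hwx : wgcdOne n a x)
    (l : ℚ) (hl : l ≠ 0) (hxy : ∀ i, (y i : ℚ) = l ^ (a i) * x i)
    (hwy : wgcdOne n a y) :
    (⨆ i, (|y i| : ℝ) ^ ((a i : ℝ)⁻¹)) = ⨆ i, (|x i| : ℝ) ^ ((a i : ℝ)⁻¹) :=
  stmt_2_general n a ha x y hwx l hl hxy hwy
end

section
/- If x ∈ ℤ^{n+1} is nonzero with wgcd(x) = 1 and λ ∈ ℚ^× satisfies λ^{a_i} x_i ∈ ℤ for all i and wgcd(λ^{a_0}x_0, ..., λ^{a_n}x_n) = 1, then λ = ±1; consequently if all a_i are even then the integral representative with weighted gcd 1 is unique. -/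
-- Numerator and denominator have the same valuations, hence are equal, and coprime.
theorem Rat.eq_one_or_eq_neg_one_of_padicValRat_eq_zero {q : ℚ} (hq : q ≠ 0)
    (h : ∀ p : ℕ, p.Prime → padicValRat p q = 0) : q = 1 ∨ q = -1 := by
  have hnum_den : q.num.natAbs = q.den := by
    refine Nat.eq_of_factorization_eq (by simpa using hq) q.den_ne_zero fun p => ?_
    by_cases hp : p.Prime
    · have hvp := h p hp
      rw [padicValRat_def, padicValInt] at hvp
      rw [Nat.factorization_def _ hp, Nat.factorization_def _ hp]
      omega
    · simp [Nat.factorization_eq_zero_of_not_prime _ hp]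
  have hden : q.den = 1 := by
    simpa [hnum_den] using q.reduced
  have hnum : q.num = 1 ∨ q.num = -1 := Int.natAbs_eq_iff.mp (hnum_den.trans hden)
  rw [← Rat.coe_int_num_of_den_eq_one hden]
  rcases hnum with h1 | h1 <;> simp [h1]

theorem padicValInt_eq_mul_padicValRat_add {p : ℕ} [Fact p.Prime] {l : ℚ} {k : ℕ} {u v : ℤ}
    (hl : l ≠ 0) (hv : v ≠ 0) (h : (u : ℚ) = l ^ k * v) :
    (padicValInt p u : ℤ) = k * padicValRat p l + padicValInt p v := by
  rw [← padicValRat.of_int, ← padicValRat.of_int, h,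
    padicValRat.mul (pow_ne_zero _ hl) (Int.cast_ne_zero.mpr hv), padicValRat.pow]

theorem padicValRat_nonneg_of_wgcdOne {n : ℕ} {a : Fin (n + 1) → ℕ} {x y : Fin (n + 1) → ℤ}
    {l : ℚ} (ha : ∀ i, 1 ≤ a i) (hwx : wgcdOne n a x) (hl : l ≠ 0)
    (hxy : ∀ i, (y i : ℚ) = l ^ a i * x i) (p : ℕ) [Fact p.Prime] : 0 ≤ padicValRat p l := by
  obtain ⟨i, hxi, hdiv⟩ := hwx p Fact.out
  have hlt : (padicValInt p (x i) : ℤ) < a i := by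
    exact_mod_cast (Nat.div_eq_zero_iff_lt (ha i)).mp hdiv
  have hval := padicValInt_eq_mul_padicValRat_add (p := p) hl hxi (hxy i)
  have hpos : (0 : ℤ) < a i * (padicValRat p l + 1) := by
    linarith [(padicValInt p (y i)).cast_nonneg (α := ℤ)]
  have := pos_of_mul_pos_right hpos (Int.natCast_nonneg _)
  omega

theorem stmt_3_general (n : ℕ) (a : Fin (n+1) → ℕ) (ha : ∀ i, 1 ≤ a i)
    (x y : Fin (n+1) → ℤ) (hwx : wgcdOne n a x)
    (l : ℚ) (hl : l ≠ 0) (hxy : ∀ i, (y i : ℚ) = l ^ (a i) * x i)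
    (hwy : wgcdOne n a y) :
    (l = 1 ∨ l = -1) ∧ ((∀ i, Even (a i)) → y = x) := by
  have hyx : ∀ i, (x i : ℚ) = l⁻¹ ^ a i * y i := fun i => by
    rw [hxy i, inv_pow, inv_mul_cancel_left₀ (pow_ne_zero _ hl)]
  have hval : ∀ p : ℕ, p.Prime → padicValRat p l = 0 := by
    intro p hp
    have : Fact p.Prime := ⟨hp⟩
    have hinv := padicValRat_nonneg_of_wgcdOne ha hwy (inv_ne_zero hl) hyx p
    rw [padicValRat.inv, neg_nonneg] at hinv
    exact le_antisymm hinv (padicValRat_nonneg_of_wgcdOne ha hwx hl hxy p)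
  have hpm := Rat.eq_one_or_eq_neg_one_of_padicValRat_eq_zero hl hval
  refine ⟨hpm, fun heven => funext fun i => ?_⟩
  have hpow : l ^ a i = 1 := by
    rcases hpm with rfl | rfl
    · exact one_pow _
    · exact (heven i).neg_one_pow
  exact_mod_cast (hxy i).trans (by rw [hpow, one_mul] : l ^ a i * x i = x i)

theorem stmt_3 (n : ℕ) (a : Fin (n+1) → ℕ) (ha : ∀ i, 1 ≤ a i)
    (x y : Fin (n+1) → ℤ) (hx0 : x ≠ 0) (hwx : wgcdOne n a x)
    (l : ℚ) (hl : l ≠ 0) (hxy : ∀ i, (y i : ℚ) = l ^ (a i) * x i)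
    (hwy : wgcdOne n a y) :
    (l = 1 ∨ l = -1) ∧ ((∀ i, Even (a i)) → y = x) :=
  stmt_3_general n a ha x y hwx l hl hxy hwy
end
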